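/- arXiv:2305.12023 — 3 statements merged into one kernel-verified Lean document; each statement's English description precedes it below -/
import Mathlib

section
/- For every integer k ≥ 1 and every symmetric n×n 0,1-matrix M with n ≥ 1, if M has no k-wide symmetric division, then M admits a sequence of symmetric divisions each of which is 2(k+1)-diagonal. -/
open Finset

noncomputable section
open scoped Classical
set_option linter.unusedSectionVars false
set_option linter.unusedVariables false

namespace StretchPaper

/-! ### Partitions, red graphs, component twin-width and stretch-width of graphs -/

variable {V : Type} [Fintype V] [DecidableEq V]

/-- Two parts are inhomogeneous in `G`. -/
def Inhomog (G : SimpleGraph V) (X Y : Finset V) : Prop :=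
  (∃ x ∈ X, ∃ y ∈ Y, G.Adj x y) ∧ (∃ x ∈ X, ∃ y ∈ Y, ¬ G.Adj x y)

lemma Inhomog.symm {G : SimpleGraph V} {X Y : Finset V} (h : Inhomog G X Y) :
    Inhomog G Y X := by
  obtain ⟨⟨x, hx, y, hy, hxy⟩, ⟨x', hx', y', hy', hxy'⟩⟩ := h
  exact ⟨⟨y, hy, x, hx, hxy.symm⟩, ⟨y', hy', x', hx', fun hc => hxy' hc.symm⟩⟩

/-- `P` is obtained from `Q` by merging two parts. -/
def MergeStep (Q P : Finpartition (Finset.univ : Finset V)) : Prop :=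
  ∃ A ∈ Q.parts, ∃ B ∈ Q.parts, A ≠ B ∧
    P.parts = insert (A ∪ B) ((Q.parts.erase A).erase B)

/-- `l = [P_n, …, P_1]` is a partition sequence: it starts at the partition into
singletons, ends at the partition with the single part `univ`, and each partition is
obtained from the previous one by merging two parts. -/
def IsPartitionSeq (l : List (Finpartition (Finset.univ : Finset V))) : Prop :=
  (∃ P, l.head? = some P ∧ ∀ X ∈ P.parts, X.card = 1) ∧
  (∃ P, l.getLast? = some P ∧ P.parts = {Finset.univ}) ∧
  l.Chain' MergeStep

/-- The red graph of a partition: parts are vertices, inhomogeneous pairs are edges. -/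
def redGraph (G : SimpleGraph V) (P : Finpartition (Finset.univ : Finset V)) :
    SimpleGraph {X : Finset V // X ∈ P.parts} where
  Adj X Y := X ≠ Y ∧ Inhomog G X.1 Y.1
  symm := ⟨fun X Y h => ⟨h.1.symm, h.2.symm⟩⟩
  loopless := ⟨fun X h => h.1 rfl⟩

/-- The largest number of parts contained in a single connected component of the red graph. -/
def maxRedComponentSize (G : SimpleGraph V) (P : Finpartition (Finset.univ : Finset V)) : ℕ :=
  Finset.univ.sup fun X : {X : Finset V // X ∈ P.parts} =>
    (Finset.univ.filter fun Y => (redGraph G P).Reachable X Y).card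

/-- Component twin-width. -/
def ctww (G : SimpleGraph V) : ℕ :=
  sInf { k | ∃ l, IsPartitionSeq l ∧ ∀ P ∈ l, maxRedComponentSize G P ≤ k }

section Ord
variable [LinearOrder V]

/-- The convex closure (span) of a set of vertices along the linear order. -/
def conv (X : Finset V) : Finset V :=
  Finset.univ.filter fun v => (∃ a ∈ X, a ≤ v) ∧ ∃ b ∈ X, v ≤ b

/-- Two sets are in conflict if their spans intersect. -/
def Conflict (X Y : Finset V) : Prop := (conv X ∩ conv Y).Nonempty

/-- The union of a part `X` and of all parts adjacent to `X` in the red graph. -/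
def redClosedNbhd (G : SimpleGraph V) (P : Finpartition (Finset.univ : Finset V))
    (X : Finset V) : Finset V :=
  X ∪ (P.parts.filter fun Y => Y ≠ X ∧ Inhomog G X Y).biUnion id

/-- The stretch of a part `X` of `P`: the number of parts `Y ≠ X` that conflict with the
union of `X` and all parts adjacent to `X` in the red graph (i.e. that interfere with `X`). -/
def stretchPart (G : SimpleGraph V) (P : Finpartition (Finset.univ : Finset V))
    (X : Finset V) : ℕ :=
  ((P.parts.erase X).filter fun Y => Conflict Y (redClosedNbhd G P X)).card

/-- The stretch of a partition: the maximum stretch of a part. -/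
def stretchPartition (G : SimpleGraph V) (P : Finpartition (Finset.univ : Finset V)) : ℕ :=
  P.parts.sup fun X => stretchPart G P X

/-- Stretch-width of the ordered graph `(G, ≤)`. -/
def stwOrd (G : SimpleGraph V) : ℕ :=
  sInf { k | ∃ l, IsPartitionSeq l ∧ ∀ P ∈ l, stretchPartition G P ≤ k }

end Ord

/-- Stretch-width of `G`: minimum over all linear orders on the vertices. -/
def stw (G : SimpleGraph V) : ℕ :=
  sInf (Set.range fun L : LinearOrder V => @stwOrd V _ _ L G)


/-! ### Symmetric 0,1-matrices: stretch-width and divisions -/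

variable {n : ℕ}

/-- The zone `R × C` of `M` is non-constant. -/
def NonConstZone (M : Fin n → Fin n → Bool) (R C : Finset (Fin n)) : Prop :=
  ∃ r ∈ R, ∃ r' ∈ R, ∃ c ∈ C, ∃ c' ∈ C, M r c ≠ M r' c'

/-- `D_R`: the union of `R` and of all parts `C` of `P` with `R × C` non-constant. -/
def matBag (M : Fin n → Fin n → Bool) (P : Finpartition (Finset.univ : Finset (Fin n)))
    (R : Finset (Fin n)) : Finset (Fin n) :=
  R ∪ (P.parts.filter fun C => NonConstZone M R C).biUnion id

/-- The stretch value of a part `R` of `P`. -/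
def matStretchPart (M : Fin n → Fin n → Bool) (P : Finpartition (Finset.univ : Finset (Fin n)))
    (R : Finset (Fin n)) : ℕ :=
  (P.parts.filter fun Q => Conflict Q (matBag M P R)).card

/-- The stretch value of a partition. -/
def matStretch (M : Fin n → Fin n → Bool)
    (P : Finpartition (Finset.univ : Finset (Fin n))) : ℕ :=
  P.parts.sup fun R => matStretchPart M P R

/-- Stretch-width of a symmetric 0,1-matrix. -/
def stwM (M : Fin n → Fin n → Bool) : ℕ :=
  sInf { k | ∃ l : List (Finpartition (Finset.univ : Finset (Fin n))),
    IsPartitionSeq l ∧ ∀ P ∈ l, matStretch M P ≤ k }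

/-- A symmetric division `(I_1, …, I_p)` of `[n]` into consecutive nonempty intervals;
out-of-range indices denote the empty set. -/
structure SymDiv (n : ℕ) where
  p : ℕ
  I : ℤ → Finset (Fin n)
  out_empty : ∀ j : ℤ, (j < 1 ∨ (p : ℤ) < j) → I j = ∅
  in_nonempty : ∀ j : ℤ, 1 ≤ j → j ≤ (p : ℤ) → (I j).Nonempty
  interval : ∀ j : ℤ, ∀ a ∈ I j, ∀ c ∈ I j, ∀ b : Fin n, a ≤ b → b ≤ c → b ∈ I j
  increasing : ∀ j : ℤ, ∀ a ∈ I j, ∀ b ∈ I (j + 1), a < b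
  covers : ∀ v : Fin n, ∃ j : ℤ, v ∈ I j

/-- The restriction of row `r` of `M` to the columns outside `U`. -/
def rowRestr (M : Fin n → Fin n → Bool) (U : Finset (Fin n)) (r : Fin n) :
    Fin n → Option Bool :=
  fun c => if c ∈ U then none else some (M r c)

/-- The union `I_j ∪ I_{j+1} ∪ … ∪ I_{j+k-1}`. -/
def window (D : SymDiv n) (j : ℤ) (k : ℕ) : Finset (Fin n) :=
  (Finset.Icc j (j + (k : ℤ) - 1)).biUnion D.I

/-- The part `I_i` of `D` is `k`-wide. -/
def WidePart (M : Fin n → Fin n → Bool) (D : SymDiv n) (k : ℕ) (i : ℤ) : Prop :=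
  ∀ j : ℤ, j ≤ i → i ≤ j + (k : ℤ) - 1 →
    k ≤ ((D.I i).image (rowRestr M (window D j k))).card

/-- The division `D` is `k`-wide. -/
def WideDiv (M : Fin n → Fin n → Bool) (D : SymDiv n) (k : ℕ) : Prop :=
  ∀ i : ℤ, 1 ≤ i → i ≤ (D.p : ℤ) → WidePart M D k i

/-- The division `D` is `k`-diagonal. -/
def DiagDiv (M : Fin n → Fin n → Bool) (D : SymDiv n) (k : ℕ) : Prop :=
  ∀ i : ℤ, 1 ≤ i → i ≤ (D.p : ℤ) → ¬ WidePart M D k i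

/-- `D` is obtained from `E` by merging two consecutive intervals. -/
def DivMerge (E D : SymDiv n) : Prop :=
  D.p + 1 = E.p ∧ ∃ m : ℤ, 1 ≤ m ∧ m < (E.p : ℤ) ∧
    (∀ j : ℤ, j < m → D.I j = E.I j) ∧
    D.I m = E.I m ∪ E.I (m + 1) ∧
    (∀ j : ℤ, m < j → D.I j = E.I (j + 1))

/-- `l = [D_n, …, D_1]` is a sequence of symmetric divisions: from the division into
`n` singletons to the division with one part, merging two consecutive intervals at each step. -/
def IsDivSeq (l : List (SymDiv n)) : Prop :=
  (∃ D, l.head? = some D ∧ D.p = n) ∧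
  (∃ D, l.getLast? = some D ∧ D.p = 1) ∧
  l.Chain' DivMerge


/-! ### Ordered graphs, crossing edges, overlap graphs -/

section Overlap
variable {α : Type} [LinearOrder α]

/-- The left (smaller) endpoint of an edge. -/
def eL (e : Sym2 α) : α := Sym2.lift ⟨fun a b => min a b, fun a b => min_comm a b⟩ e

/-- The right (larger) endpoint of an edge. -/
def eR (e : Sym2 α) : α := Sym2.lift ⟨fun a b => max a b, fun a b => max_comm a b⟩ e

/-- Two edges cross: `L(e) ≺ L(f) ≺ R(e) ≺ R(f)` or `L(f) ≺ L(e) ≺ R(f) ≺ R(e)`. -/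
def Cross (e f : Sym2 α) : Prop :=
  (eL e < eL f ∧ eL f < eR e ∧ eR e < eR f) ∨
  (eL f < eL e ∧ eL e < eR f ∧ eR f < eR e)

/-- The overlap graph of `(G, ≤)` has a `K_{t,t}` subgraph: two disjoint sets of `t` edges
of `G` each, such that every edge of one set crosses every edge of the other. -/
def OvHasKtt (G : SimpleGraph α) (t : ℕ) : Prop :=
  ∃ A B : Finset (Sym2 α), ↑A ⊆ G.edgeSet ∧ ↑B ⊆ G.edgeSet ∧ Disjoint A B ∧
    A.card = t ∧ B.card = t ∧ ∀ e ∈ A, ∀ f ∈ B, Cross e f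

variable [Fintype α]

/-- The interior of an edge: the vertices strictly between its endpoints. -/
def edgeInterior (e : Sym2 α) : Finset α :=
  Finset.univ.filter fun x => eL e < x ∧ x < eR e

/-- The length of an edge: the number of vertices `x` with `L(e) ≺ x ⪯ R(e)`. -/
def edgeLen (e : Sym2 α) : ℕ := (Finset.univ.filter fun x => eL e < x ∧ x ≤ eR e).card

/-- The maximum length of an edge of `S` (0 if `S` is empty). -/
def lenSup (S : Finset (Sym2 α)) : ℕ := S.sup edgeLen

/-- A rainbow: a set of edges of `G` whose interiors are pairwise nested. -/
def IsRainbow (G : SimpleGraph α) (S : Finset (Sym2 α)) : Prop :=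
  ↑S ⊆ G.edgeSet ∧
  ∀ e ∈ S, ∀ f ∈ S, edgeInterior e ⊆ edgeInterior f ∨ edgeInterior f ⊆ edgeInterior e

/-- A rainbow over the vertex `v`. -/
def IsRainbowOver (G : SimpleGraph α) (S : Finset (Sym2 α)) (v : α) : Prop :=
  IsRainbow G S ∧ ∀ e ∈ S, eL e < v ∧ v < eR e

/-- A maximum rainbow over `v`. -/
def IsMaxRainbowOver (G : SimpleGraph α) (S : Finset (Sym2 α)) (v : α) : Prop :=
  IsRainbowOver G S v ∧ ∀ S' : Finset (Sym2 α), IsRainbowOver G S' v → S'.card ≤ S.card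

end Overlap

/-! ### Balanced separators and tree-decompositions -/

section Sep
variable {V : Type} [Fintype V] [DecidableEq V]

/-- `C` is a `c`-balanced separator of `G`. -/
def IsBalancedSeparator (G : SimpleGraph V) (c : ℝ) (C : Finset V) : Prop :=
  ∃ A B : Finset V, Disjoint A B ∧ A ∪ B = Finset.univ \ C ∧
    (∀ a ∈ A, ∀ b ∈ B, ¬ G.Adj a b) ∧
    (A.card : ℝ) ≤ (1 - c) * (Fintype.card V) ∧
    (B.card : ℝ) ≤ (1 - c) * (Fintype.card V)

/-- `(T, β)` is a tree-decomposition of `G`. -/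
def IsTreeDecomp (G : SimpleGraph V) {m : ℕ} (T : SimpleGraph (Fin m))
    (β : Fin m → Finset V) : Prop :=
  T.Connected ∧ T.IsAcyclic ∧
  (∀ v : V, ∃ t, v ∈ β t) ∧
  (∀ u v : V, G.Adj u v → ∃ t, u ∈ β t ∧ v ∈ β t) ∧
  (∀ v : V, (T.induce {t | v ∈ β t}).Connected)

/-- Treewidth: the minimum width of a tree-decomposition of `G`. -/
def treewidth (G : SimpleGraph V) : ℕ :=
  sInf { k | ∃ (m : ℕ) (T : SimpleGraph (Fin m)) (β : Fin m → Finset V),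
    IsTreeDecomp G T β ∧ (Finset.univ.sup fun t => (β t).card) - 1 ≤ k }

end Sep


/-! ### Subdivisions -/

/-- The internal vertices of a walk (its support minus the two endpoints). -/
def walkInternal {W : Type} {H : SimpleGraph W} {a b : W} (p : H.Walk a b) : List W :=
  p.support.tail.dropLast

/-- `H` is obtained from `G` by subdividing every edge at least `s` times. -/
def IsSubdivisionGE {V W : Type} (G : SimpleGraph V) (H : SimpleGraph W) (s : ℕ) : Prop :=
  ∃ (φ : V ↪ W) (p : ∀ u v : V, G.Adj u v → H.Walk (φ u) (φ v)),
    (∀ u v huv, (p u v huv).IsPath) ∧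
    (∀ u v huv, s + 1 ≤ (p u v huv).length) ∧
    (∀ u v huv, p u v huv = (p v u huv.symm).reverse) ∧
    (∀ u v huv, ∀ x ∈ walkInternal (p u v huv), x ∉ Set.range φ) ∧
    (∀ u v huv, ∀ u' v' h', s(u, v) ≠ s(u', v') →
      ∀ x ∈ walkInternal (p u v huv), x ∉ walkInternal (p u' v' h')) ∧
    (∀ x : W, x ∈ Set.range φ ∨ ∃ u v huv, x ∈ walkInternal (p u v huv)) ∧
    (∀ e ∈ H.edgeSet, ∃ u v huv, e ∈ (p u v huv).edges)

/-- Subdividing the edge `uv` of `G` once: the new vertex is `none : Option V`. -/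
def subdivideOnce {V : Type} (G : SimpleGraph V) (u v : V) : SimpleGraph (Option V) where
  Adj x y :=
    match x, y with
    | some a, some b => G.Adj a b ∧ s(a, b) ≠ s(u, v)
    | some a, none => a = u ∨ a = v
    | none, some b => b = u ∨ b = v
    | none, none => False
  symm := by
    refine ⟨?_⟩
    rintro (_ | a) (_ | b) h
    · exact h
    · exact h
    · exact h
    · exact ⟨h.1.symm, by rw [Sym2.eq_swap]; exact h.2⟩
  loopless := by
    refine ⟨?_⟩
    rintro (_ | a) h
    · exact h
    · exact G.loopless.irrefl a h.1

/-! ### Flattening (iterated subdivisions) -/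

/-- The number of vertices strictly between `u` and `v`. -/
def interiorCount {V : Type} [Fintype V] [LinearOrder V] (u v : V) : ℕ :=
  (Finset.univ.filter fun x => u < x ∧ x < v).card

/-- The ordered graph `H` is obtained from `(G, ≤)` by flattening the edge `uv`, via the
order-embedding `φ` of old vertices and the new vertices `w 0, …, w h` interleaved with
the vertices between `u` and `v`. -/
def IsFlattenStepWith {V W : Type} [Fintype V] [LinearOrder V] [Fintype W] [LinearOrder W]
    (G : SimpleGraph V) (u v : V) (H : SimpleGraph W) (φ : V → W) (w : ℕ → W) : Prop :=
  G.Adj u v ∧ u < v ∧ StrictMono φ ∧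
  (∀ x : W, (∃ a : V, x = φ a) ∨ ∃ i ≤ interiorCount u v, x = w i) ∧
  (∀ a : V, ∀ i ≤ interiorCount u v, φ a ≠ w i) ∧
  (∀ i ≤ interiorCount u v,
    (Finset.univ.filter fun x => u ≤ x ∧ x ≤ v ∧ φ x < w i).card = i + 1) ∧
  (∀ a b : W, H.Adj a b ↔
    ((∃ x y : V, G.Adj x y ∧ s(x, y) ≠ s(u, v) ∧ s(a, b) = s(φ x, φ y)) ∨
     s(a, b) = s(φ u, w 0) ∨
     (∃ i : ℕ, i + 1 ≤ interiorCount u v ∧ s(a, b) = s(w i, w (i + 1))) ∨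
     s(a, b) = s(w (interiorCount u v), φ v)))

/-! ### The graphs `A_3^h` -/

/-- The graph `A_3^h` on vertex set `{0, …, 3^h − 1}`: distinct `u, v` are adjacent iff
`|⌊u/3^l⌋ − ⌊v/3^l⌋| = 3` for some `l < h`. -/
def Agraph (h : ℕ) : SimpleGraph (Fin (3 ^ h)) where
  Adj u v := u ≠ v ∧ ∃ l < h,
    ((u : ℕ) / 3 ^ l = (v : ℕ) / 3 ^ l + 3 ∨ (v : ℕ) / 3 ^ l = (u : ℕ) / 3 ^ l + 3)
  symm := by
    refine ⟨?_⟩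
    rintro u v ⟨hne, l, hl, hd⟩
    exact ⟨hne.symm, l, hl, hd.symm⟩
  loopless := ⟨fun u h => h.1 rfl⟩



/-!
Starting from the division into singletons, which is trivially diagonal, merge two consecutive
parts at a time while keeping the division `2(k+1)`-diagonal. Merging only enlarges the windows
around the other parts, so only the merged part can become wide. If every possible merge of a
diagonal division `D` made its merged part `2(k+1)`-wide, then grouping the parts of `D` in
consecutive pairs would give a `k`-wide division.
-/

namespace SymDiv

variable {D : SymDiv n} {j j' : ℤ} {v w : Fin n}

lemma bounds_of_mem (hv : v ∈ D.I j) : 1 ≤ j ∧ j ≤ (D.p : ℤ) := by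
  by_contra hj
  rw [D.out_empty j (by omega)] at hv
  simp at hv

lemma lt_of_mem_of_mem_of_lt (hv : v ∈ D.I j) (hw : w ∈ D.I j') (hjj' : j < j') : v < w := by
  induction j', hjj' using Int.leInduction generalizing w with
  | base => exact D.increasing j v hv w hw
  | succ j' hjj' ih =>
    have := bounds_of_mem hv
    obtain ⟨u, hu⟩ := D.in_nonempty j' (by omega) (by have := bounds_of_mem hw; omega)
    exact (ih hu).trans (D.increasing j' u hu w hw)

-- Divisions are handled through this monotone map onto `[1, p]` (see `ofIndex` for the converse),
-- which turns all interval bookkeeping into integer arithmetic.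
def idx (D : SymDiv n) (v : Fin n) : ℤ := (D.covers v).choose

lemma mem_I_idx (D : SymDiv n) (v : Fin n) : v ∈ D.I (D.idx v) := (D.covers v).choose_spec

lemma mem_I_iff : v ∈ D.I j ↔ D.idx v = j := by
  refine ⟨fun hv => ?_, fun h => h ▸ D.mem_I_idx v⟩
  by_contra hne
  rcases lt_or_gt_of_ne hne with hlt | hlt
  · exact lt_irrefl v (lt_of_mem_of_mem_of_lt (D.mem_I_idx v) hv hlt)
  · exact lt_irrefl v (lt_of_mem_of_mem_of_lt hv (D.mem_I_idx v) hlt)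

lemma idx_bounds (D : SymDiv n) (v : Fin n) : 1 ≤ D.idx v ∧ D.idx v ≤ (D.p : ℤ) :=
  bounds_of_mem (D.mem_I_idx v)

lemma exists_idx_eq (h1 : 1 ≤ j) (h2 : j ≤ (D.p : ℤ)) : ∃ v, D.idx v = j := by
  obtain ⟨v, hv⟩ := D.in_nonempty j h1 h2
  exact ⟨v, mem_I_iff.mp hv⟩

lemma idx_monotone (D : SymDiv n) : Monotone D.idx := fun v w hvw =>
  not_lt.mp fun hlt => (lt_of_mem_of_mem_of_lt (D.mem_I_idx w) (D.mem_I_idx v) hlt).not_ge hvw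

lemma mem_window_iff {K : ℕ} : v ∈ window D j K ↔ j ≤ D.idx v ∧ D.idx v ≤ j + K - 1 := by
  simp [window, mem_I_iff]

def ofIndex (p : ℕ) (f : Fin n → ℤ) (hf : Monotone f) (hrange : ∀ v, 1 ≤ f v ∧ f v ≤ (p : ℤ))
    (hsurj : ∀ j : ℤ, 1 ≤ j → j ≤ (p : ℤ) → ∃ v, f v = j) : SymDiv n where
  p := p
  I j := univ.filter (f · = j)
  out_empty j hj := eq_empty_of_forall_notMem fun v hv => by
    have := hrange v
    simp only [mem_filter, mem_univ, true_and] at hv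
    omega
  in_nonempty j h1 h2 := by
    obtain ⟨v, hv⟩ := hsurj j h1 h2
    exact ⟨v, by simp [hv]⟩
  interval j a ha c hc b hab hbc := by
    simp only [mem_filter, mem_univ, true_and] at ha hc ⊢
    exact le_antisymm (hc ▸ hf hbc) (ha ▸ hf hab)
  increasing j a ha b hb := by
    simp only [mem_filter, mem_univ, true_and] at ha hb
    exact lt_of_not_ge fun hba => by have := hf hba; omega
  covers v := ⟨f v, by simp⟩

lemma idx_ofIndex {p : ℕ} {f : Fin n → ℤ} {hf hrange hsurj} (v : Fin n) :
    (ofIndex p f hf hrange hsurj).idx v = f v :=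
  mem_I_iff.mp (mem_filter.mpr ⟨mem_univ v, rfl⟩)

end SymDiv

open SymDiv

lemma card_image_rowRestr_le_of_subset (M : Fin n → Fin n → Bool) {U U' R R' : Finset (Fin n)}
    (hU : U ⊆ U') (hR : R ⊆ R') :
    (R.image (rowRestr M U')).card ≤ (R'.image (rowRestr M U)).card := by
  have hfactor : R.image (rowRestr M U') =
      (R.image (rowRestr M U)).image (fun f c => if c ∈ U' then none else f c) := by
    rw [image_image]
    refine image_congr fun r _ => funext fun c => ?_
    by_cases hc : c ∈ U'
    · simp [rowRestr, hc]
    · have hcU : c ∉ U := fun h => hc (hU h)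
      simp [rowRestr, hc, hcU]
  rw [hfactor]
  exact card_image_le.trans (card_le_card (image_subset_image hR))

lemma WidePart.of_subset {M : Fin n → Fin n → Bool} {D E : SymDiv n} {K K' : ℕ} {i i' : ℤ}
    (hw : WidePart M D K i) (hK : K' ≤ K) (hI : D.I i ⊆ E.I i')
    (hwin : ∀ j', j' ≤ i' → i' ≤ j' + K' - 1 →
      ∃ j, j ≤ i ∧ i ≤ j + K - 1 ∧ window E j' K' ⊆ window D j K) :
    WidePart M E K' i' := by
  intro j' hj1 hj2
  obtain ⟨j, hj, hj', hsub⟩ := hwin j' hj1 hj2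
  exact hK.trans ((hw j hj hj').trans (card_image_rowRestr_le_of_subset M hsub hI))

lemma not_widePart_of_card_lt {M : Fin n → Fin n → Bool} {D : SymDiv n} {K : ℕ} {i : ℤ}
    (hcard : (D.I i).card < K) : ¬ WidePart M D K i := fun hw =>
  (hcard.trans_le ((hw i le_rfl (by omega)).trans card_image_le)).false

def singletonDiv (n : ℕ) : SymDiv n :=
  ofIndex n (fun v => (v : ℤ) + 1) (by intro v w h; simpa using h)
    (fun v => by have := v.isLt; omega)
    (fun j h1 h2 => ⟨⟨(j - 1).toNat, by omega⟩, by simp; omega⟩)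

lemma idx_singletonDiv (v : Fin n) : (singletonDiv n).idx v = v + 1 := idx_ofIndex v

lemma diagDiv_singletonDiv (M : Fin n → Fin n → Bool) {K : ℕ} (hK : 2 ≤ K) :
    DiagDiv M (singletonDiv n) K := by
  refine fun i _ _ => not_widePart_of_card_lt (lt_of_le_of_lt (card_le_one.mpr ?_) hK)
  intro a ha b hb
  rw [mem_I_iff, idx_singletonDiv] at ha hb
  exact Fin.ext (by omega)

def mergeDiv (D : SymDiv n) (m : ℤ) (hm1 : 1 ≤ m) (hm2 : m < (D.p : ℤ)) : SymDiv n :=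
  ofIndex (D.p - 1) (fun v => if D.idx v ≤ m then D.idx v else D.idx v - 1)
    (by intro v w hvw; have := D.idx_monotone hvw; dsimp only; split_ifs <;> omega)
    (fun v => by have := D.idx_bounds v; split_ifs <;> omega)
    (fun j h1 h2 => by
      obtain ⟨v, hv⟩ := D.exists_idx_eq (j := if j ≤ m then j else j + 1)
        (by split_ifs <;> omega) (by split_ifs <;> omega)
      exact ⟨v, by split_ifs at hv ⊢ <;> omega⟩)

section MergeDiv

variable {D : SymDiv n} {m : ℤ} {hm1 : 1 ≤ m} {hm2 : m < (D.p : ℤ)}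

lemma p_mergeDiv : (mergeDiv D m hm1 hm2).p = D.p - 1 := rfl

lemma idx_mergeDiv (v : Fin n) :
    (mergeDiv D m hm1 hm2).idx v = if D.idx v ≤ m then D.idx v else D.idx v - 1 :=
  idx_ofIndex v

lemma divMerge_mergeDiv : DivMerge D (mergeDiv D m hm1 hm2) := by
  refine ⟨by rw [p_mergeDiv]; omega, m, hm1, hm2, fun j hj => ?_, ?_,
    fun j hj => ?_⟩ <;> ext v <;>
    simp only [mem_union, mem_I_iff, idx_mergeDiv] <;> split_ifs <;> omega

lemma not_widePart_mergeDiv_of_ne {M : Fin n → Fin n → Bool} {K : ℕ} (hD : DiagDiv M D K)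
    {i : ℤ} (hi1 : 1 ≤ i) (hi2 : i ≤ ((mergeDiv D m hm1 hm2).p : ℤ)) (hne : i ≠ m) :
    ¬ WidePart M (mergeDiv D m hm1 hm2) K i := by
  rw [p_mergeDiv] at hi2
  refine fun hw => hD (if i < m then i else i + 1) (by split_ifs <;> omega)
    (by split_ifs <;> omega) (hw.of_subset le_rfl (fun v => ?_) fun j hj1 hj2 => ?_)
  · simp only [mem_I_iff, idx_mergeDiv]
    split_ifs <;> omega
  · refine ⟨if i < m then j else j - 1, by split_ifs at hj1 hj2 ⊢ <;> omega,
      by split_ifs at hj1 hj2 ⊢ <;> omega, fun v => ?_⟩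
    simp only [mem_window_iff, idx_mergeDiv]
    split_ifs at hj1 hj2 ⊢ <;> omega

end MergeDiv

/-- Parts `2t - 1` and `2t` of `D` form part `t`; for odd `D.p` the last part joins the last pair. -/
def pairDiv (D : SymDiv n) (hp : 2 ≤ D.p) : SymDiv n :=
  ofIndex (D.p / 2) (fun v => min ((D.idx v + 1) / 2) ((D.p / 2 : ℕ) : ℤ))
    (by intro v w hvw; have := D.idx_monotone hvw; dsimp only; omega)
    (fun v => by have := D.idx_bounds v; omega)
    (fun j h1 h2 => by
      obtain ⟨v, hv⟩ := D.exists_idx_eq (j := 2 * j - 1) (by omega) (by omega)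
      exact ⟨v, by omega⟩)

/-- A window of `k` parts of `pairDiv D` is a window of at most `2k + 1` parts of `D`, hence lies
in a window of `2(k+1)` parts of any merge of `D`. -/
lemma wideDiv_pairDiv {M : Fin n → Fin n → Bool} {D : SymDiv n} (hp : 2 ≤ D.p) {k : ℕ}
    (hmerge : ∀ m (hm1 : 1 ≤ m) (hm2 : m < (D.p : ℤ)),
      WidePart M (mergeDiv D m hm1 hm2) (2 * (k + 1)) m) :
    WideDiv M (pairDiv D hp) k := by
  intro t ht1 ht2
  have hpair : ∀ v, (pairDiv D hp).idx v = min ((D.idx v + 1) / 2) ((D.p / 2 : ℕ) : ℤ) :=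
    idx_ofIndex
  have ht : t ≤ ((D.p / 2 : ℕ) : ℤ) := ht2
  refine (hmerge (2 * t - 1) (by omega) (by omega)).of_subset (by omega) (fun v => ?_)
    fun j hj1 hj2 => ⟨2 * j - 2, by omega, by omega, fun v => ?_⟩
  · simp only [mem_I_iff, idx_mergeDiv]
    split_ifs <;> rw [hpair] <;> omega
  · have := D.idx_bounds v
    simp only [mem_window_iff, idx_mergeDiv]
    split_ifs <;> rw [hpair] <;> omega

lemma exists_divMerge_diagDiv {M : Fin n → Fin n → Bool} {k : ℕ}
    (h : ¬ ∃ D : SymDiv n, WideDiv M D k) {D : SymDiv n} (hp : 2 ≤ D.p)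
    (hD : DiagDiv M D (2 * (k + 1))) :
    ∃ E, DivMerge D E ∧ DiagDiv M E (2 * (k + 1)) := by
  by_contra! hE
  refine h ⟨pairDiv D hp, wideDiv_pairDiv hp fun m hm1 hm2 => ?_⟩
  obtain ⟨i, hi1, hi2, hw⟩ : ∃ i, 1 ≤ i ∧ i ≤ ((mergeDiv D m hm1 hm2).p : ℤ) ∧
      WidePart M (mergeDiv D m hm1 hm2) (2 * (k + 1)) i := by
    simpa [DiagDiv] using hE _ divMerge_mergeDiv
  obtain rfl : i = m := by_contra fun hne => not_widePart_mergeDiv_of_ne hD hi1 hi2 hne hw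
  exact hw

lemma exists_chain_divMerge_of_step {P : SymDiv n → Prop}
    (step : ∀ D : SymDiv n, 2 ≤ D.p → P D → ∃ E, DivMerge D E ∧ P E)
    {D : SymDiv n} (hD : 1 ≤ D.p) (hPD : P D) : ∃ l : List (SymDiv n), l.head? = some D ∧
      (∃ E, l.getLast? = some E ∧ E.p = 1) ∧ l.IsChain DivMerge ∧ ∀ E ∈ l, P E := by
  obtain ⟨p, hp⟩ : ∃ p, D.p = p + 1 := ⟨D.p - 1, by omega⟩
  induction p generalizing D with
  | zero => exact ⟨[D], rfl, ⟨D, rfl, hp⟩, List.isChain_singleton D, by simpa⟩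
  | succ p ih =>
    obtain ⟨E, hDE, hPE⟩ := step D (by omega) hPD
    have hEp : E.p = p + 1 := by have := hDE.1; omega
    obtain ⟨l, hhead, hlast, hchain, hP⟩ := ih (by omega) hPE hEp
    obtain ⟨l, rfl⟩ : ∃ l', l = E :: l' := ⟨l.tail, List.eq_cons_of_mem_head? hhead⟩
    refine ⟨D :: E :: l, rfl, ?_, List.isChain_cons_cons.mpr ⟨hDE, hchain⟩, ?_⟩
    · simpa [List.getLast?_cons_cons] using hlast
    · simpa [hPD] using hP

theorem diag_div_seq_of_no_wide_division_general (n k : ℕ) (hn : 1 ≤ n)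
    (M : Fin n → Fin n → Bool)
    (h : ¬ ∃ D : SymDiv n, WideDiv M D k) :
    ∃ l : List (SymDiv n), IsDivSeq l ∧ ∀ D ∈ l, DiagDiv M D (2 * (k + 1)) := by
  obtain ⟨l, hhead, hlast, hchain, hdiag⟩ :=
    exists_chain_divMerge_of_step (fun _ hp => exists_divMerge_diagDiv h hp)
      (D := singletonDiv n) hn (diagDiv_singletonDiv M (by omega))
  exact ⟨l, ⟨⟨_, hhead, rfl⟩, hlast, hchain⟩, hdiag⟩

/-- If the symmetric 0,1-matrix `M` has no `k`-wide symmetric division, then `M` admits a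
sequence of symmetric divisions each of which is `2(k+1)`-diagonal. -/
theorem diag_div_seq_of_no_wide_division (n k : ℕ) (hk : 1 ≤ k) (hn : 1 ≤ n)
    (M : Fin n → Fin n → Bool) (hM : ∀ i j, M i j = M j i)
    (h : ¬ ∃ D : SymDiv n, WideDiv M D k) :
    ∃ l : List (SymDiv n), IsDivSeq l ∧ ∀ D ∈ l, DiagDiv M D (2 * (k + 1)) :=
  diag_div_seq_of_no_wide_division_general n k hn M h

end StretchPaper
end
end

section
/- For all integers d ≥ 1 and t ≥ 1 and every ordered graph (G,≺) with maximum degree at most d and stw(G,≺) ≤ t, the overlap graph Ov(G,≺) has no K_{N,N} subgraph with N = 4td². -/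
open Finset

noncomputable section
open scoped Classical
set_option linter.unusedSectionVars false
set_option linter.unusedVariables false

namespace StretchPaper

/-! ### Partitions, red graphs, component twin-width and stretch-width of graphs -/

variable {V : Type} [Fintype V] [DecidableEq V]

/-! ### Symmetric 0,1-matrices: stretch-width and divisions -/

variable {n : ℕ}

/-!
Let `A, B` be the two sides of a `K_{N,N}` in the overlap graph, `N = 4td²`, and let `U` be the
set of their endpoints. An edge of `A` is crossed by all `N` edges of `B`, each of which has an
endpoint strictly inside it; as a vertex lies on at most `d` edges, at least `4td` vertices of
`U` lie inside it, and symmetrically for `B`. Hence every `v ∈ U` has a neighbour `w` such that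
the span of `{v, w}` contains `4td` vertices of `U`.

Call a part `X` of a partition heavy if the span of `X` together with its red neighbours
contains `4td` vertices of `U`. No part of the partition into singletons is heavy, while `V`
itself is, so along a partition sequence there is a merge step `Q → P` where `Q` has no heavy
part but `P` has a heavy part `X`. In `Q` every part `Z` meets `U` in at most `d` vertices: for
`v ∈ Z ∩ U` with its neighbour `w` as above, the part of `w` cannot be `Z` or red-adjacent to
`Z` (else `Z` is heavy), so it is completely joined to `Z`, and `Z` lies in the neighbourhood
of `w`. The span of `X` and its red neighbours is covered by `X` and the at most `t` parts
interfering with `X`, which are parts of `Q` except for the merged one; so it contains at most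
`(t + 2)d < 4td` vertices of `U`, a contradiction.
-/

section Endpoints
variable {α : Type} [LinearOrder α]

lemma mk_eL_eR (e : Sym2 α) : s(eL e, eR e) = e := by
  induction e using Sym2.ind with
  | _ a b => rcases le_total a b with h | h <;> simp [eL, eR, h, Sym2.eq_swap]

lemma eL_mem (e : Sym2 α) : eL e ∈ e := by
  simpa only [mk_eL_eR] using Sym2.mem_mk_left (eL e) (eR e)

lemma eR_mem (e : Sym2 α) : eR e ∈ e := by
  simpa only [mk_eL_eR] using Sym2.mem_mk_right (eL e) (eR e)

lemma Cross.symm {e f : Sym2 α} (h : Cross e f) : Cross f e := Or.symm h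

lemma Cross.exists_mem_edgeInterior [Fintype α] {e f : Sym2 α} (h : Cross e f) :
    ∃ x ∈ f, x ∈ edgeInterior e := by
  rcases h with ⟨h₁, h₂, -⟩ | ⟨-, h₂, h₃⟩
  · exact ⟨eL f, eL_mem f, by simp [edgeInterior, h₁, h₂]⟩
  · exact ⟨eR f, eR_mem f, by simp [edgeInterior, h₂, h₃]⟩

end Endpoints

section Conv
variable [LinearOrder V]

lemma mem_conv {X : Finset V} {v : V} :
    v ∈ conv X ↔ (∃ a ∈ X, a ≤ v) ∧ ∃ b ∈ X, v ≤ b := by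
  simp [conv]

lemma subset_conv (X : Finset V) : X ⊆ conv X :=
  fun v hv => mem_conv.2 ⟨⟨v, hv, le_rfl⟩, ⟨v, hv, le_rfl⟩⟩

lemma conv_mono {X Y : Finset V} (h : X ⊆ Y) : conv X ⊆ conv Y := by
  intro v hv
  obtain ⟨⟨a, ha, hav⟩, ⟨b, hb, hvb⟩⟩ := mem_conv.1 hv
  exact mem_conv.2 ⟨⟨a, h ha, hav⟩, ⟨b, h hb, hvb⟩⟩

lemma conv_singleton (z : V) : conv ({z} : Finset V) = {z} := by
  ext x
  simp only [mem_conv, mem_singleton, exists_eq_left]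
  exact ⟨fun h => le_antisymm h.2 h.1, fun h => ⟨h.ge, h.le⟩⟩

lemma edgeInterior_mk_subset_conv (a b : V) : edgeInterior s(a, b) ⊆ conv {a, b} := by
  intro x hx
  obtain ⟨-, hax : min a b < x, hxb : x < max a b⟩ := mem_filter.1 hx
  simp only [mem_conv, mem_insert, mem_singleton, exists_eq_or_imp, exists_eq_left]
  exact ⟨(min_lt_iff.1 hax).imp le_of_lt le_of_lt, (lt_max_iff.1 hxb).imp le_of_lt le_of_lt⟩

end Conv

section Crossings
variable [LinearOrder V]

def endpoints (S : Finset (Sym2 V)) : Finset V := S.biUnion Sym2.toFinset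

lemma mem_endpoints {S : Finset (Sym2 V)} {x : V} : x ∈ endpoints S ↔ ∃ e ∈ S, x ∈ e := by
  simp [endpoints, Sym2.mem_toFinset]

lemma card_filter_mem_le_degree {G : SimpleGraph V} {S : Finset (Sym2 V)} (hS : ↑S ⊆ G.edgeSet)
    (x : V) : #(S.filter (x ∈ ·)) ≤ G.degree x := by
  rw [← G.card_incidenceFinset_eq_degree]
  refine card_le_card fun f hf => ?_
  rw [mem_filter] at hf
  simp [SimpleGraph.incidenceSet, hS hf.1, hf.2]

lemma card_le_mul_card_edgeInterior_inter {G : SimpleGraph V} {d : ℕ}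
    (hdeg : ∀ v, G.degree v ≤ d) {S : Finset (Sym2 V)} (hS : ↑S ⊆ G.edgeSet) {g : Sym2 V}
    (hg : ∀ f ∈ S, Cross g f) : #S ≤ d * #(edgeInterior g ∩ endpoints S) := by
  have hcover : S ⊆ (edgeInterior g ∩ endpoints S).biUnion fun x => S.filter (x ∈ ·) := by
    intro f hf
    obtain ⟨x, hxf, hx⟩ := (hg f hf).exists_mem_edgeInterior
    exact mem_biUnion.2
      ⟨x, mem_inter.2 ⟨hx, mem_endpoints.2 ⟨f, hf, hxf⟩⟩, mem_filter.2 ⟨hf, hxf⟩⟩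
  calc #S ≤ ∑ x ∈ edgeInterior g ∩ endpoints S, #(S.filter (x ∈ ·)) :=
        (card_le_card hcover).trans card_biUnion_le
    _ ≤ ∑ _x ∈ edgeInterior g ∩ endpoints S, d :=
        sum_le_sum fun x _ => (card_filter_mem_le_degree hS x).trans (hdeg x)
    _ = d * #(edgeInterior g ∩ endpoints S) := by rw [sum_const, smul_eq_mul, mul_comm]

lemma exists_adj_edgeInterior_subset_conv {G : SimpleGraph V} {e : Sym2 V} (he : e ∈ G.edgeSet)
    {v : V} (hv : v ∈ e) : ∃ w, G.Adj v w ∧ edgeInterior e ⊆ conv {v, w} := by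
  obtain ⟨w, rfl⟩ := Sym2.mem_iff_exists.1 hv
  exact ⟨w, he, edgeInterior_mk_subset_conv v w⟩

lemma exists_adj_le_card_conv_inter_endpoints {G : SimpleGraph V} {d m : ℕ} (hd : 0 < d)
    (hdeg : ∀ v, G.degree v ≤ d) {A B : Finset (Sym2 V)} (hA : ↑A ⊆ G.edgeSet)
    (hB : ↑B ⊆ G.edgeSet) (hAcard : d * m ≤ #A) (hBcard : d * m ≤ #B)
    (hAB : ∀ e ∈ A, ∀ f ∈ B, Cross e f) :
    ∀ v ∈ endpoints (A ∪ B),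
      ∃ w, G.Adj v w ∧ m ≤ #(conv {v, w} ∩ endpoints (A ∪ B)) := by
  intro v hv
  obtain ⟨g, hg, hvg⟩ := mem_endpoints.1 hv
  obtain ⟨S, hSAB, hSE, hScard, hcross⟩ :
      ∃ S ⊆ A ∪ B, ↑S ⊆ G.edgeSet ∧ d * m ≤ #S ∧ ∀ f ∈ S, Cross g f := by
    rcases mem_union.1 hg with hgA | hgB
    · exact ⟨B, subset_union_right, hB, hBcard, hAB g hgA⟩
    · exact ⟨A, subset_union_left, hA, hAcard, fun f hf => (hAB f hf g hgB).symm⟩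
  have hgE : g ∈ G.edgeSet := by
    rcases mem_union.1 hg with hgA | hgB
    exacts [hA hgA, hB hgB]
  obtain ⟨w, hvw, hgw⟩ := exists_adj_edgeInterior_subset_conv hgE hvg
  have hrich : m ≤ #(edgeInterior g ∩ endpoints S) := Nat.le_of_mul_le_mul_left
    (hScard.trans (card_le_mul_card_edgeInterior_inter hdeg hSE hcross)) hd
  have hsub : endpoints S ⊆ endpoints (A ∪ B) := biUnion_subset_biUnion_of_subset_left _ hSAB
  exact ⟨w, hvw, hrich.trans (card_le_card (inter_subset_inter hgw hsub))⟩

end Crossings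

lemma exists_mem_rel_of_isChain {β : Type*} {R : β → β → Prop} {p : β → Prop}
    {l : List β} (hl : l.IsChain R) (hhead : ∀ a ∈ l.head?, ¬ p a)
    (hlast : ∃ b ∈ l.getLast?, p b) :
    ∃ a ∈ l, ∃ b ∈ l, R a b ∧ ¬ p a ∧ p b := by
  by_contra! h
  obtain ⟨b, hb, hpb⟩ := hlast
  exact (List.IsChain.iff_mem.1 hl).induction (fun a => ¬ p a) l
    (fun x y ⟨hx, hy, hxy⟩ => h x hx y hy hxy) (fun hne => hhead _ (List.head_mem_head? hne))
    b (List.mem_of_getLast? hb) hpb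

section PartitionSequences

def mergeParts (P : Finpartition (univ : Finset V)) {A B : Finset V}
    (hA : A ∈ P.parts) (hB : B ∈ P.parts) (hAB : A ≠ B) : Finpartition (univ : Finset V) where
  parts := insert (A ∪ B) ((P.parts.erase A).erase B)
  supIndep := by
    rw [supIndep_iff_pairwiseDisjoint]
    intro X hX Y hY hXY
    simp only [coe_insert, Set.mem_insert_iff, mem_coe, mem_erase] at hX hY
    rcases hX with rfl | ⟨hXB, hXA, hX⟩ <;> rcases hY with rfl | ⟨hYB, hYA, hY⟩
    · exact absurd rfl hXY
    · exact disjoint_union_left.2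
        ⟨P.disjoint hA hY (Ne.symm hYA), P.disjoint hB hY (Ne.symm hYB)⟩
    · exact disjoint_union_right.2 ⟨P.disjoint hX hA hXA, P.disjoint hX hB hXB⟩
    · exact P.disjoint hX hY hXY
  sup_parts := by
    have hP : P.parts = insert A (insert B ((P.parts.erase A).erase B)) := by
      rw [insert_erase (mem_erase.2 ⟨Ne.symm hAB, hB⟩), insert_erase hA]
    refine Eq.trans ?_ P.sup_parts
    conv_rhs => rw [hP]
    simp only [sup_insert, id]
    exact sup_assoc ..
  bot_notMem h := by
    rcases mem_insert.1 h with h | h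
    · exact P.ne_bot hA (eq_bot_iff.2 (h ▸ subset_union_left))
    · exact P.bot_notMem (mem_of_mem_erase (mem_of_mem_erase h))

lemma mergeStep_mergeParts (P : Finpartition (univ : Finset V)) {A B : Finset V}
    (hA : A ∈ P.parts) (hB : B ∈ P.parts) (hAB : A ≠ B) :
    MergeStep P (mergeParts P hA hB hAB) :=
  ⟨A, hA, B, hB, hAB, rfl⟩

lemma card_parts_mergeParts_lt (P : Finpartition (univ : Finset V)) {A B : Finset V}
    (hA : A ∈ P.parts) (hB : B ∈ P.parts) (hAB : A ≠ B) :
    #(mergeParts P hA hB hAB).parts < #P.parts := by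
  have hB' : B ∈ P.parts.erase A := mem_erase.2 ⟨Ne.symm hAB, hB⟩
  have h₁ := card_insert_le (A ∪ B) ((P.parts.erase A).erase B)
  have h₂ := card_erase_of_mem hB'
  have h₃ := card_erase_of_mem hA
  have h₄ := card_pos.2 ⟨B, hB'⟩
  change #(insert _ _) < _
  omega

lemma exists_mergeStep_chain_to_top [Nonempty V] (P : Finpartition (univ : Finset V)) :
    ∃ l : List (Finpartition (univ : Finset V)), l.head? = some P ∧
      (∃ Q ∈ l.getLast?, Q.parts = {univ}) ∧ l.IsChain MergeStep := by
  induction hn : #P.parts using Nat.strong_induction_on generalizing P with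
  | _ n ih =>
  obtain hle | hlt := le_or_gt #P.parts 1
  · obtain ⟨X, hX⟩ :=
      card_eq_one.1 (hle.antisymm (P.parts_nonempty univ_nonempty.ne_empty).card_pos)
    have hXuniv : X = univ := by simpa [hX] using P.sup_parts
    exact ⟨[P], rfl, ⟨P, rfl, hXuniv ▸ hX⟩, List.isChain_singleton P⟩
  · obtain ⟨A, hA, B, hB, hAB⟩ := one_lt_card.1 hlt
    obtain ⟨l, hhead, hlast, hl⟩ :=
      ih _ (hn ▸ card_parts_mergeParts_lt P hA hB hAB) (mergeParts P hA hB hAB) rfl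
    obtain ⟨l', rfl⟩ := List.head?_eq_some_iff.1 hhead
    exact ⟨P :: _ :: l', rfl, by rwa [List.getLast?_cons_cons],
      List.isChain_cons_cons.2 ⟨mergeStep_mergeParts P hA hB hAB, hl⟩⟩

lemma exists_isPartitionSeq [Nonempty V] : ∃ l : List (Finpartition (univ : Finset V)),
    IsPartitionSeq l := by
  obtain ⟨l, hhead, ⟨Q, hQ, hQuniv⟩, hl⟩ :=
    exists_mergeStep_chain_to_top (⊥ : Finpartition (univ : Finset V))
  refine ⟨l, ⟨⊥, hhead, fun X hX => ?_⟩, ⟨Q, hQ, hQuniv⟩, hl⟩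
  rw [Finpartition.parts_bot] at hX
  obtain ⟨a, -, rfl⟩ := mem_map.1 hX
  simp

lemma sum_card_inter_le_of_mergeStep {Q P : Finpartition (univ : Finset V)} (h : MergeStep Q P)
    {U : Finset V} {d : ℕ} (hQ : ∀ Z ∈ Q.parts, #(Z ∩ U) ≤ d) {H : Finset (Finset V)}
    (hH : H ⊆ P.parts) : ∑ Z ∈ H, #(Z ∩ U) ≤ (#H + 1) * d := by
  obtain ⟨A, hA, B, hB, -, hP⟩ := h
  have hZ : ∀ Z ∈ H, #(Z ∩ U) ≤ d + if Z = A ∪ B then d else 0 := by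
    intro Z hZ
    have hZP := hH hZ
    rw [hP] at hZP
    rcases mem_insert.1 hZP with rfl | hZQ
    · rw [if_pos rfl, union_inter_distrib_right]
      exact (card_union_le _ _).trans (add_le_add (hQ A hA) (hQ B hB))
    · exact (hQ Z (mem_of_mem_erase (mem_of_mem_erase hZQ))).trans (Nat.le_add_right _ _)
  calc ∑ Z ∈ H, #(Z ∩ U) ≤ ∑ Z ∈ H, (d + if Z = A ∪ B then d else 0) := sum_le_sum hZ
    _ = #H * d + if A ∪ B ∈ H then d else 0 := by
      rw [sum_add_distrib, sum_const, smul_eq_mul, sum_ite_eq']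
    _ ≤ (#H + 1) * d := by split_ifs <;> simp [add_mul]

end PartitionSequences

section HeavyParts
variable [LinearOrder V]

/-- `stwOrd G` is the junk value `sInf ∅ = 0` unless some partition sequence exists, which needs
`Nonempty V`. -/
lemma exists_isPartitionSeq_stretchPartition_le [Nonempty V] {G : SimpleGraph V} {t : ℕ}
    (h : stwOrd G ≤ t) :
    ∃ l, IsPartitionSeq l ∧ ∀ P ∈ l, stretchPartition G P ≤ t := by
  obtain ⟨l₀, hl₀⟩ := exists_isPartitionSeq (V := V)
  have hne : {k | ∃ l, IsPartitionSeq l ∧ ∀ P ∈ l, stretchPartition G P ≤ k}.Nonempty :=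
    ⟨(l₀.map (stretchPartition G)).sum, l₀, hl₀,
      fun P hP => List.le_sum_of_mem (List.mem_map_of_mem hP)⟩
  obtain ⟨l, hl, hbound⟩ := Nat.sInf_mem hne
  exact ⟨l, hl, fun P hP => (hbound P hP).trans h⟩

def HasHeavyPart (G : SimpleGraph V) (U : Finset V) (K : ℕ)
    (P : Finpartition (univ : Finset V)) : Prop :=
  ∃ X ∈ P.parts, K ≤ #(conv (redClosedNbhd G P X) ∩ U)

lemma subset_redClosedNbhd (G : SimpleGraph V) (P : Finpartition (univ : Finset V))
    (X : Finset V) : X ⊆ redClosedNbhd G P X :=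
  subset_union_left

lemma subset_redClosedNbhd_of_inhomog {G : SimpleGraph V} {P : Finpartition (univ : Finset V)}
    {X Y : Finset V} (hY : Y ∈ P.parts) (hXY : Y ≠ X) (h : Inhomog G X Y) :
    Y ⊆ redClosedNbhd G P X :=
  fun _ hy => mem_union_right _ (mem_biUnion.2 ⟨Y, mem_filter.2 ⟨hY, hXY, h⟩, hy⟩)

lemma not_inhomog_of_card_eq_one {G : SimpleGraph V} {X Y : Finset V} (hX : #X = 1)
    (hY : #Y = 1) : ¬ Inhomog G X Y := by
  obtain ⟨x, rfl⟩ := card_eq_one.1 hX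
  obtain ⟨y, rfl⟩ := card_eq_one.1 hY
  simp [Inhomog]

lemma not_hasHeavyPart_of_forall_card_eq_one {G : SimpleGraph V} {U : Finset V} {K : ℕ}
    (hK : 1 < K) {P : Finpartition (univ : Finset V)} (hP : ∀ X ∈ P.parts, #X = 1) :
    ¬ HasHeavyPart G U K P := by
  rintro ⟨X, hX, hheavy⟩
  have hnbhd : redClosedNbhd G P X = X := by
    refine union_eq_left.2 (biUnion_subset.2 fun Y hY => ?_)
    obtain ⟨hY, -, hXY⟩ := mem_filter.1 hY
    exact absurd hXY (not_inhomog_of_card_eq_one (hP X hX) (hP Y hY))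
  obtain ⟨x, rfl⟩ := card_eq_one.1 (hP X hX)
  rw [hnbhd, conv_singleton] at hheavy
  have := card_le_card (inter_subset_left (s₁ := {x}) (s₂ := U))
  rw [card_singleton] at this
  omega

lemma hasHeavyPart_of_parts_eq_univ {G : SimpleGraph V} {U : Finset V} {K : ℕ} (hK : K ≤ #U)
    {P : Finpartition (univ : Finset V)} (hP : P.parts = {univ}) : HasHeavyPart G U K P := by
  refine ⟨univ, hP ▸ mem_singleton_self _, hK.trans (card_le_card fun u hu => ?_)⟩
  exact mem_inter.2 ⟨subset_conv _ (subset_redClosedNbhd G P univ (mem_univ u)), hu⟩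

lemma card_inter_le_of_not_hasHeavyPart {G : SimpleGraph V} {d K : ℕ}
    (hdeg : ∀ v, G.degree v ≤ d) {U : Finset V}
    (hspan : ∀ v ∈ U, ∃ w, G.Adj v w ∧ K ≤ #(conv {v, w} ∩ U))
    {P : Finpartition (univ : Finset V)} (hP : ¬ HasHeavyPart G U K P)
    {Z : Finset V} (hZ : Z ∈ P.parts) : #(Z ∩ U) ≤ d := by
  obtain hempty | ⟨v, hv⟩ := (Z ∩ U).eq_empty_or_nonempty
  · simp [hempty]
  obtain ⟨hvZ, hvU⟩ := mem_inter.1 hv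
  obtain ⟨w, hvw, hK⟩ := hspan v hvU
  obtain ⟨W, hW, hwW⟩ := P.exists_mem (mem_univ w)
  have hw : w ∉ redClosedNbhd G P Z := fun hw => hP ⟨Z, hZ, hK.trans <| card_le_card <|
    inter_subset_inter_right <| conv_mono <|
      insert_subset (subset_redClosedNbhd G P Z hvZ) (singleton_subset_iff.2 hw)⟩
  have hWZ : W ≠ Z := by
    rintro rfl
    exact hw (subset_redClosedNbhd G P W hwW)
  have hhom : ¬ Inhomog G Z W := fun h => hw (subset_redClosedNbhd_of_inhomog hW hWZ h hwW)
  have hZw : Z ⊆ G.neighborFinset w := fun x hx => by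
    by_contra hxw
    exact hhom ⟨⟨v, hvZ, w, hwW, hvw⟩,
      ⟨x, hx, w, hwW, fun h => hxw ((G.mem_neighborFinset _ _).2 h.symm)⟩⟩
  calc #(Z ∩ U) ≤ #Z := card_le_card inter_subset_left
    _ ≤ G.degree w := (card_le_card hZw).trans_eq (G.card_neighborFinset_eq_degree w)
    _ ≤ d := hdeg w

lemma card_conv_redClosedNbhd_inter_le {G : SimpleGraph V}
    {Q P : Finpartition (univ : Finset V)} (h : MergeStep Q P) {U : Finset V} {d : ℕ}
    (hQ : ∀ Z ∈ Q.parts, #(Z ∩ U) ≤ d) {X : Finset V} (hX : X ∈ P.parts) :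
    #(conv (redClosedNbhd G P X) ∩ U) ≤ (stretchPart G P X + 2) * d := by
  set H := insert X ((P.parts.erase X).filter fun Y => Conflict Y (redClosedNbhd G P X))
  have hH : H ⊆ P.parts := insert_subset hX ((filter_subset _ _).trans (erase_subset _ _))
  have hcover : conv (redClosedNbhd G P X) ∩ U ⊆ H.biUnion (· ∩ U) := by
    intro u hu
    obtain ⟨hu, huU⟩ := mem_inter.1 hu
    obtain ⟨Z, hZ, huZ⟩ := P.exists_mem (mem_univ u)
    refine mem_biUnion.2 ⟨Z, ?_, mem_inter.2 ⟨huZ, huU⟩⟩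
    by_cases hZX : Z = X
    · exact hZX ▸ mem_insert_self _ _
    · exact mem_insert_of_mem <| mem_filter.2
        ⟨mem_erase.2 ⟨hZX, hZ⟩, u, mem_inter.2 ⟨subset_conv Z huZ, hu⟩⟩
  have hHcard : #H ≤ stretchPart G P X + 1 := card_insert_le _ _
  calc #(conv (redClosedNbhd G P X) ∩ U) ≤ ∑ Z ∈ H, #(Z ∩ U) :=
        (card_le_card hcover).trans card_biUnion_le
    _ ≤ (#H + 1) * d := sum_card_inter_le_of_mergeStep h hQ hH
    _ ≤ (stretchPart G P X + 2) * d := Nat.mul_le_mul_right d (by omega)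

end HeavyParts

/-- If `(G, ≤)` has maximum degree at most `d` and `stw(G, ≤) ≤ t`, then the overlap graph
of `(G, ≤)` has no `K_{N,N}` subgraph with `N = 4td²`. -/
theorem no_Ktt_of_bounded_degree_and_stw {V : Type} [Fintype V] [DecidableEq V]
    [LinearOrder V] (d t : ℕ) (hd : 1 ≤ d) (ht : 1 ≤ t) (G : SimpleGraph V)
    (hdeg : ∀ v : V, (Finset.univ.filter fun u => G.Adj v u).card ≤ d)
    (hstw : stwOrd G ≤ t) :
    ¬ OvHasKtt G (4 * t * d ^ 2) := by
  rintro ⟨A, B, hA, hB, -, hAcard, hBcard, hAB⟩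
  have hdeg' : ∀ v, G.degree v ≤ d := fun v => by
    simpa [← G.card_neighborFinset_eq_degree, G.neighborFinset_eq_filter] using hdeg v
  have hN : d * (4 * t * d) = 4 * t * d ^ 2 := by ring
  set U := endpoints (A ∪ B)
  have hspan : ∀ v ∈ U, ∃ w, G.Adj v w ∧ 4 * t * d ≤ #(conv {v, w} ∩ U) :=
    exists_adj_le_card_conv_inter_endpoints hd hdeg' hA hB (by rw [hN, hAcard])
      (by rw [hN, hBcard]) hAB
  obtain ⟨g, hg⟩ : A.Nonempty := card_pos.1 (by rw [hAcard]; positivity)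
  have hgU : eL g ∈ U := mem_endpoints.2 ⟨g, mem_union_left _ hg, eL_mem g⟩
  have : Nonempty V := ⟨eL g⟩
  obtain ⟨l, ⟨⟨P₀, hP₀, hsingle⟩, ⟨P₁, hP₁, htop⟩, hl⟩, hstretch⟩ :=
    exists_isPartitionSeq_stretchPartition_le hstw
  have hfirst : ∀ a ∈ l.head?, ¬ HasHeavyPart G U (4 * t * d) a := by
    rw [hP₀]
    rintro a ⟨⟩
    exact not_hasHeavyPart_of_forall_card_eq_one (by nlinarith) hsingle
  have hlast : ∃ b ∈ l.getLast?, HasHeavyPart G U (4 * t * d) b := by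
    obtain ⟨w, -, hK⟩ := hspan _ hgU
    exact ⟨P₁, hP₁, hasHeavyPart_of_parts_eq_univ
      (hK.trans (card_le_card inter_subset_right)) htop⟩
  obtain ⟨Q, -, P, hP, hQP, hQ, X, hX, hheavy⟩ := exists_mem_rel_of_isChain hl hfirst hlast
  have hbound := card_conv_redClosedNbhd_inter_le (G := G) hQP
    (fun Z hZ => card_inter_le_of_not_hasHeavyPart hdeg' hspan hQ hZ) hX
  have hXt : stretchPart G P X ≤ t := (le_sup hX).trans (hstretch P hP)
  nlinarith

end StretchPaper
end
end

section
/- For every integer h ≥ 1, the stretch-width of the graph A_3^h is at most 9. -/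
open Finset

noncomputable section
open scoped Classical
set_option linter.unusedSectionVars false
set_option linter.unusedVariables false

namespace StretchPaper

/-! ### Partitions, red graphs, component twin-width and stretch-width of graphs -/

variable {V : Type} [Fintype V] [DecidableEq V]

/-! ### Symmetric 0,1-matrices: stretch-width and divisions -/

variable {n : ℕ}

/-! The blocks of `A_3^h` are merged level by level: on level `l`, the blocks `{v | v / 3^l = a}`
are merged, triple by triple from left to right, into the blocks of level `l + 1`. Every part
then contains a whole block of level `l` and lies in a block of level `l + 1`. Two blocks of
level `l + 1` at distance at least two are homogeneous: on the levels `j ≤ l` their vertices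
are more than 3 apart in `⌊v/3^j⌋`, and on the higher levels `⌊v/3^j⌋` only depends on the
block. Hence the red neighbourhood of a part, and its
span, stay within three consecutive blocks of level `l + 1`, which hold only nine blocks of
level `l`. -/

section Sequences
variable [LinearOrder V]

/-- `P` ends an initial segment of a partition sequence of `G` whose partitions all have
stretch at most `k`. -/
def ReachableWithStretch (G : SimpleGraph V) (k : ℕ) (P : Finpartition (univ : Finset V)) :
    Prop :=
  ∃ l : List (Finpartition (univ : Finset V)),
    (∃ P₀, l.head? = some P₀ ∧ ∀ X ∈ P₀.parts, X.card = 1) ∧ l.getLast? = some P ∧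
    l.IsChain MergeStep ∧ ∀ Q ∈ l, stretchPartition G Q ≤ k

variable {G : SimpleGraph V} {k : ℕ} {P Q : Finpartition (univ : Finset V)}

lemma ReachableWithStretch.of_singletons (hP : ∀ X ∈ P.parts, X.card = 1)
    (hk : stretchPartition G P ≤ k) : ReachableWithStretch G k P :=
  ⟨[P], ⟨P, rfl, hP⟩, rfl, List.isChain_singleton P, by simpa using hk⟩

lemma ReachableWithStretch.mergeStep (hP : ReachableWithStretch G k P) (hPQ : MergeStep P Q)
    (hk : stretchPartition G Q ≤ k) : ReachableWithStretch G k Q := by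
  obtain ⟨l, ⟨P₀, hhead, hP₀⟩, hlast, hchain, hstretch⟩ := hP
  have hne : l ≠ [] := by rintro rfl; simp at hlast
  refine ⟨l ++ [Q], ⟨P₀, ?_, hP₀⟩, by simp, ?_, ?_⟩
  · rwa [List.head?_append_of_ne_nil _ hne]
  · exact hchain.append (List.isChain_singleton Q) (by simp [hlast, hPQ])
  · simpa [or_imp, forall_and] using ⟨hstretch, hk⟩

lemma stwOrd_le_of_reachableWithStretch (hP : ReachableWithStretch G k P)
    (huniv : P.parts = {univ}) : stwOrd G ≤ k := by
  obtain ⟨l, hhead, hlast, hchain, hstretch⟩ := hP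
  exact Nat.sInf_le ⟨l, ⟨hhead, ⟨P, hlast, huniv⟩, hchain⟩, hstretch⟩

end Sequences

lemma mem_conv_of_monotone {α β : Type} [Fintype α] [LinearOrder α] [Preorder β]
    {f : α → β} (hf : Monotone f) {X : Finset α} {s : Set β} (hs : s.OrdConnected)
    (hX : ∀ x ∈ X, f x ∈ s) : ∀ z ∈ conv X, f z ∈ s := by
  intro z hz
  simp only [conv, mem_filter, mem_univ, true_and] at hz
  obtain ⟨⟨a, ha, haz⟩, b, hb, hzb⟩ := hz
  exact hs.out (hX a ha) (hX b hb) ⟨hf haz, hf hzb⟩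

section KerPartition
variable {β : Type}

def kerPartition (f : V → β) : Finpartition (univ : Finset V) :=
  Finpartition.ofSetoid (Setoid.ker f)

def fiber (f : V → β) (v : V) : Finset V := univ.filter fun w => f w = f v

@[simp]
lemma mem_fiber {f : V → β} {v w : V} : w ∈ fiber f v ↔ f w = f v := by
  simp [fiber]

lemma fiber_eq_fiber_iff {f : V → β} {v w : V} : fiber f v = fiber f w ↔ f v = f w := by
  refine ⟨fun h ↦ mem_fiber.1 (h ▸ mem_fiber.2 rfl), fun h ↦ ?_⟩
  ext x
  simp [h]

lemma mem_kerPartition_parts {f : V → β} {X : Finset V} :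
    X ∈ (kerPartition f).parts ↔ ∃ v, fiber f v = X := by
  simp only [kerPartition, Finpartition.ofSetoid, Finpartition.ofSetSetoid_parts, mem_image,
    mem_univ, true_and, fiber, Setoid.ker_def, eq_comm]

lemma kerPartition_congr {f : V → β} {γ : Type} {g : V → γ}
    (hfg : ∀ v w, f v = f w ↔ g v = g w) : kerPartition f = kerPartition g := by
  ext X
  simp only [mem_kerPartition_parts, fiber, hfg]

lemma mergeStep_kerPartition [DecidableEq β] {f g : V → β} {a b : β} (hab : a ≠ b)
    (ha : a ∈ Set.range f) (hb : b ∈ Set.range f) (hg : ∀ v, g v = if f v = b then a else f v) :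
    MergeStep (kerPartition f) (kerPartition g) := by
  obtain ⟨va, rfl⟩ := ha
  obtain ⟨vb, rfl⟩ := hb
  have hfiber : ∀ v, fiber g v =
      if f v = f va ∨ f v = f vb then fiber f va ∪ fiber f vb else fiber f v := by
    intro v
    ext w
    by_cases hwb : f w = f vb <;> by_cases hvb : f v = f vb <;>
      by_cases hva : f v = f va <;> simp_all [eq_comm]
  refine ⟨fiber f va, mem_kerPartition_parts.2 ⟨va, rfl⟩, fiber f vb,
    mem_kerPartition_parts.2 ⟨vb, rfl⟩, fiber_eq_fiber_iff.not.2 hab, ?_⟩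
  ext Y
  simp only [mem_kerPartition_parts, mem_insert, mem_erase]
  constructor
  · rintro ⟨v, rfl⟩
    rw [hfiber v]
    split_ifs with hv
    · exact Or.inl rfl
    · obtain ⟨hva, hvb⟩ := not_or.1 hv
      exact Or.inr ⟨fiber_eq_fiber_iff.not.2 hvb, fiber_eq_fiber_iff.not.2 hva, v, rfl⟩
  · rintro (rfl | ⟨hYb, hYa, v, rfl⟩)
    · exact ⟨va, by rw [hfiber, if_pos (Or.inl rfl)]⟩
    · rw [Ne, fiber_eq_fiber_iff] at hYa hYb
      exact ⟨v, by rw [hfiber, if_neg (not_or.2 ⟨hYa, hYb⟩)]⟩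

end KerPartition

lemma div_three_pow_add (x l j : ℕ) : x / 3 ^ (l + j) = x / 3 ^ l / 3 ^ j := by
  rw [pow_add, Nat.div_div_eq_div_mul]

lemma add_four_le_div_pow_of_lt {x y l m : ℕ} (hlm : l < m) (h : x / 3 ^ m + 2 ≤ y / 3 ^ m) :
    x / 3 ^ l + 4 ≤ y / 3 ^ l := by
  have hstep : ∀ n, x / 3 ^ (n + 1) + 2 ≤ y / 3 ^ (n + 1) → x / 3 ^ n + 4 ≤ y / 3 ^ n := by
    intro n hn
    rw [div_three_pow_add, div_three_pow_add, pow_one] at hn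
    omega
  induction m, hlm using Nat.le_induction with
  | base => exact hstep l h
  | succ m _ ih => exact ih (by have := hstep m h; omega)

lemma Agraph_adj_of_div_pow_eq {h m : ℕ} {u v u' v' : Fin (3 ^ h)}
    (hfar : (u : ℕ) / 3 ^ m + 2 ≤ (v : ℕ) / 3 ^ m) (hu : (u' : ℕ) / 3 ^ m = (u : ℕ) / 3 ^ m)
    (hv : (v' : ℕ) / 3 ^ m = (v : ℕ) / 3 ^ m) (huv : (Agraph h).Adj u v) :
    (Agraph h).Adj u' v' := by
  obtain ⟨-, l, hl, hd⟩ := huv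
  refine ⟨fun he ↦ by subst he; omega, l, hl, ?_⟩
  rcases lt_or_ge l m with hlm | hml
  · have := add_four_le_div_pow_of_lt hlm hfar
    omega
  · obtain ⟨j, rfl⟩ := Nat.exists_eq_add_of_le hml
    simp only [div_three_pow_add] at hd ⊢
    rwa [hu, hv]

lemma not_inhomog_Agraph {h m c d : ℕ} {X Y : Finset (Fin (3 ^ h))}
    (hX : ∀ x ∈ X, (x : ℕ) / 3 ^ m = c) (hY : ∀ y ∈ Y, (y : ℕ) / 3 ^ m = d)
    (hcd : c + 2 ≤ d ∨ d + 2 ≤ c) : ¬ Inhomog (Agraph h) X Y := by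
  rintro ⟨⟨x, hx, y, hy, hxy⟩, ⟨x', hx', y', hy', hxy'⟩⟩
  apply hxy'
  rcases hcd with hcd | hcd
  · exact Agraph_adj_of_div_pow_eq (by rw [hX x hx, hY y hy]; omega)
      (by rw [hX x hx, hX x' hx']) (by rw [hY y hy, hY y' hy']) hxy
  · exact (Agraph_adj_of_div_pow_eq (by rw [hX x hx, hY y hy]; omega)
      (by rw [hY y hy, hY y' hy']) (by rw [hX x hx, hX x' hx']) hxy.symm).symm

/-- Every part contains a whole block `{y | y / 3 ^ m = a}` of level `m` and lies inside a
single block of level `m + 1`. -/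
def IsSandwichedAtLevel (h m : ℕ) (P : Finpartition (univ : Finset (Fin (3 ^ h)))) : Prop :=
  ∀ X ∈ P.parts, ∃ v ∈ X, (∀ y : Fin (3 ^ h), (y : ℕ) / 3 ^ m = (v : ℕ) / 3 ^ m → y ∈ X) ∧
    ∀ x ∈ X, (x : ℕ) / 3 ^ (m + 1) = (v : ℕ) / 3 ^ (m + 1)

section Sandwiched
variable {h m : ℕ} {P : Finpartition (univ : Finset (Fin (3 ^ h)))}

lemma IsSandwichedAtLevel.div_eq (hP : IsSandwichedAtLevel h m P) {X : Finset (Fin (3 ^ h))}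
    (hX : X ∈ P.parts) {x y : Fin (3 ^ h)} (hx : x ∈ X) (hy : y ∈ X) :
    (x : ℕ) / 3 ^ (m + 1) = (y : ℕ) / 3 ^ (m + 1) := by
  obtain ⟨v, -, -, hsub⟩ := hP X hX
  rw [hsub x hx, hsub y hy]

lemma IsSandwichedAtLevel.div_mem_Icc_of_mem_redClosedNbhd (hP : IsSandwichedAtLevel h m P)
    {X : Finset (Fin (3 ^ h))} (hX : X ∈ P.parts) {x z : Fin (3 ^ h)} (hx : x ∈ X)
    (hz : z ∈ redClosedNbhd (Agraph h) P X) :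
    (z : ℕ) / 3 ^ (m + 1) ∈ Set.Icc ((x : ℕ) / 3 ^ (m + 1) - 1) ((x : ℕ) / 3 ^ (m + 1) + 1) := by
  simp only [redClosedNbhd, mem_union, mem_biUnion, mem_filter, id] at hz
  obtain hz | ⟨Y, ⟨hY, -, hXY⟩, hzY⟩ := hz
  · rw [hP.div_eq hX hz hx]
    exact ⟨Nat.sub_le _ _, Nat.le_succ _⟩
  · rw [Set.mem_Icc]
    by_contra hfar
    refine not_inhomog_Agraph (fun x' hx' ↦ hP.div_eq hX hx' hx)
      (fun y hy ↦ hP.div_eq hY hy hzY) ?_ hXY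
    generalize (x : ℕ) / 3 ^ (m + 1) = c at *
    generalize (z : ℕ) / 3 ^ (m + 1) = d at *
    omega

lemma IsSandwichedAtLevel.div_mem_Icc_of_conflict (hP : IsSandwichedAtLevel h m P)
    {X Y : Finset (Fin (3 ^ h))} (hX : X ∈ P.parts) (hY : Y ∈ P.parts) {x y : Fin (3 ^ h)}
    (hx : x ∈ X) (hy : y ∈ Y) (hconf : Conflict Y (redClosedNbhd (Agraph h) P X)) :
    (y : ℕ) / 3 ^ (m + 1) ∈ Set.Icc ((x : ℕ) / 3 ^ (m + 1) - 1) ((x : ℕ) / 3 ^ (m + 1) + 1) := by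
  have hmono : Monotone fun z : Fin (3 ^ h) ↦ (z : ℕ) / 3 ^ (m + 1) :=
    fun a b hab ↦ Nat.div_le_div_right hab
  obtain ⟨z, hz⟩ := hconf
  rw [mem_inter] at hz
  have hzy : (z : ℕ) / 3 ^ (m + 1) ∈ ({(y : ℕ) / 3 ^ (m + 1)} : Set ℕ) :=
    mem_conv_of_monotone hmono Set.ordConnected_singleton
      (fun y' hy' ↦ hP.div_eq hY hy' hy) z hz.1
  rw [← Set.mem_singleton_iff.1 hzy]
  exact mem_conv_of_monotone hmono Set.ordConnected_Icc
    (fun z hz ↦ hP.div_mem_Icc_of_mem_redClosedNbhd hX hx hz) z hz.2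

lemma IsSandwichedAtLevel.stretchPartition_le_nine (hP : IsSandwichedAtLevel h m P) :
    stretchPartition (Agraph h) P ≤ 9 := by
  refine Finset.sup_le fun X hX ↦ ?_
  obtain ⟨x, hx, -⟩ := hP X hX
  choose rep hrep hblock _ using id hP
  set c := (x : ℕ) / 3 ^ (m + 1)
  -- an interfering part is determined by the level-`m` block it contains
  calc stretchPart (Agraph h) P X
      ≤ (Icc (3 * c - 3) (3 * c + 5)).card := by
        refine card_le_card_of_injOn
          (fun Y ↦ if hY : Y ∈ P.parts then (rep Y hY : ℕ) / 3 ^ m else 0) ?_ ?_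
        · intro Y hY
          simp only [coe_filter, mem_erase, Set.mem_ofPred_eq] at hY
          obtain ⟨⟨-, hY⟩, hconf⟩ := hY
          have hrepY := hP.div_mem_Icc_of_conflict hX hY hx (hrep Y hY) hconf
          rw [div_three_pow_add (rep Y hY : ℕ), pow_one, Set.mem_Icc] at hrepY
          simp only [dif_pos hY, coe_Icc, Set.mem_Icc]
          generalize (rep Y hY : ℕ) / 3 ^ m = a at *
          omega
        · intro Y hY Y' hY' heq
          simp only [coe_filter, mem_erase, Set.mem_ofPred_eq] at hY hY'
          simp only [dif_pos hY.1.2, dif_pos hY'.1.2] at heq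
          exact P.eq_of_mem_parts hY.1.2 hY'.1.2 (hrep Y _) (hblock Y' _ _ heq)
    _ ≤ 9 := by
      rw [Nat.card_Icc]
      omega

end Sandwiched

/-- The key of block `d` of a level after `k` merges on that level: blocks `3q + 1` and `3q + 2`
join block `3q` at the merges `2q + 1` and `2q + 2`. -/
def levelKey (k d : ℕ) : ℕ := if 2 * (d / 3) + d % 3 ≤ k then 3 * (d / 3) else d

lemma levelKey_div_three (k d : ℕ) : levelKey k d / 3 = d / 3 := by
  unfold levelKey; split_ifs <;> omega

lemma levelKey_zero (d : ℕ) : levelKey 0 d = d := by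
  unfold levelKey; split_ifs <;> omega

lemma levelKey_succ (k d : ℕ) : levelKey (k + 1) d =
    if levelKey k d = 3 * (k / 2) + k % 2 + 1 then 3 * (k / 2) else levelKey k d := by
  unfold levelKey; split_ifs <;> omega

lemma levelKey_two_mul {M d : ℕ} (hd : d < 3 * M) : levelKey (2 * M) d = 3 * (d / 3) := by
  unfold levelKey; rw [if_pos (by omega)]

lemma div_pow_lt_pow_sub {h l : ℕ} (hl : l ≤ h) (v : Fin (3 ^ h)) :
    (v : ℕ) / 3 ^ l < 3 ^ (h - l) := by
  rw [Nat.div_lt_iff_lt_mul (by positivity), ← pow_add, Nat.sub_add_cancel hl]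
  exact v.isLt

lemma exists_div_pow_eq {h l d : ℕ} (hl : l ≤ h) (hd : d < 3 ^ (h - l)) :
    ∃ v : Fin (3 ^ h), (v : ℕ) / 3 ^ l = d := by
  refine ⟨⟨d * 3 ^ l, ?_⟩, Nat.mul_div_cancel d (by positivity)⟩
  calc d * 3 ^ l < 3 ^ (h - l) * 3 ^ l := by gcongr
    _ = 3 ^ h := by rw [← pow_add, Nat.sub_add_cancel hl]

def stagePartition (h l k : ℕ) : Finpartition (univ : Finset (Fin (3 ^ h))) :=
  kerPartition fun v : Fin (3 ^ h) ↦ levelKey k ((v : ℕ) / 3 ^ l)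

lemma isSandwichedAtLevel_stagePartition (h l k : ℕ) :
    IsSandwichedAtLevel h l (stagePartition h l k) := by
  intro X hX
  obtain ⟨v, rfl⟩ := mem_kerPartition_parts.1 hX
  refine ⟨v, mem_fiber.2 rfl, fun y hy ↦ mem_fiber.2 (by simp only [hy]), fun x hx ↦ ?_⟩
  have := congrArg (· / 3) (mem_fiber.1 hx)
  simp only [levelKey_div_three] at this
  rw [div_three_pow_add, div_three_pow_add, pow_one, this]

lemma mergeStep_stagePartition {h l k : ℕ} (hl : l < h) (hk : k < 2 * 3 ^ (h - l - 1)) :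
    MergeStep (stagePartition h l k) (stagePartition h l (k + 1)) := by
  have hpow : 3 ^ (h - l) = 3 * 3 ^ (h - l - 1) := by
    rw [← pow_succ']; congr 1; omega
  obtain ⟨va, hva⟩ := exists_div_pow_eq hl.le (d := 3 * (k / 2)) (by omega)
  obtain ⟨vb, hvb⟩ := exists_div_pow_eq hl.le (d := 3 * (k / 2) + k % 2 + 1) (by omega)
  refine mergeStep_kerPartition (a := 3 * (k / 2)) (b := 3 * (k / 2) + k % 2 + 1) (by omega)
    ⟨va, ?_⟩ ⟨vb, ?_⟩ fun v ↦ levelKey_succ _ _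
  · simp only [hva, levelKey]; split_ifs <;> omega
  · simp only [hvb, levelKey]; split_ifs <;> omega

lemma stagePartition_two_mul {h l : ℕ} (hl : l < h) :
    stagePartition h l (2 * 3 ^ (h - l - 1)) = stagePartition h (l + 1) 0 := by
  have hpow : 3 ^ (h - l) = 3 * 3 ^ (h - l - 1) := by
    rw [← pow_succ']; congr 1; omega
  refine kerPartition_congr fun v w ↦ ?_
  have hv := div_pow_lt_pow_sub hl.le v
  have hw := div_pow_lt_pow_sub hl.le w
  rw [levelKey_two_mul (by omega), levelKey_two_mul (by omega), levelKey_zero, levelKey_zero,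
    div_three_pow_add, div_three_pow_add, pow_one]
  omega

lemma card_eq_one_of_mem_stagePartition_zero {h : ℕ} {X : Finset (Fin (3 ^ h))}
    (hX : X ∈ (stagePartition h 0 0).parts) : X.card = 1 := by
  obtain ⟨v, rfl⟩ := mem_kerPartition_parts.1 hX
  refine card_eq_one.2 ⟨v, ext fun w ↦ ?_⟩
  simp [levelKey_zero, Fin.ext_iff]

lemma stagePartition_self_parts (h : ℕ) : (stagePartition h h 0).parts = {univ} := by
  have hfiber : ∀ v, fiber (fun v : Fin (3 ^ h) ↦ levelKey 0 ((v : ℕ) / 3 ^ h)) v = univ :=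
    fun v ↦ eq_univ_of_forall fun w ↦ by simp [Nat.div_eq_of_lt w.isLt, Nat.div_eq_of_lt v.isLt]
  ext X
  simp only [stagePartition, mem_kerPartition_parts, hfiber, mem_singleton, eq_comm (a := univ)]
  exact ⟨fun ⟨_, hX⟩ ↦ hX, fun hX ↦ ⟨⟨0, by positivity⟩, hX⟩⟩

lemma reachableWithStretch_stagePartition_of_le {h l : ℕ} (hl : l < h)
    (h0 : ReachableWithStretch (Agraph h) 9 (stagePartition h l 0)) :
    ∀ k ≤ 2 * 3 ^ (h - l - 1), ReachableWithStretch (Agraph h) 9 (stagePartition h l k) := by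
  intro k hk
  induction k with
  | zero => exact h0
  | succ k ih =>
    exact (ih (by omega)).mergeStep (mergeStep_stagePartition hl (by omega))
      (isSandwichedAtLevel_stagePartition h l (k + 1)).stretchPartition_le_nine

lemma reachableWithStretch_stagePartition_zero {h l : ℕ} (hl : l ≤ h) :
    ReachableWithStretch (Agraph h) 9 (stagePartition h l 0) := by
  induction l with
  | zero =>
    exact .of_singletons (fun X ↦ card_eq_one_of_mem_stagePartition_zero)
      (isSandwichedAtLevel_stagePartition h 0 0).stretchPartition_le_nine
  | succ l ih =>
    rw [← stagePartition_two_mul (by omega)]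
    exact reachableWithStretch_stagePartition_of_le (by omega) (ih (by omega)) _ le_rfl

theorem stw_Agraph_le_nine_general (h : ℕ) : stw (Agraph h) ≤ 9 := by
  have hord : stwOrd (Agraph h) ≤ 9 :=
    stwOrd_le_of_reachableWithStretch (reachableWithStretch_stagePartition_zero le_rfl)
      (stagePartition_self_parts h)
  refine (Nat.sInf_le ?_).trans hord
  exact ⟨inferInstance, rfl⟩

/-- The stretch-width of `A_3^h` is at most 9. -/
theorem stw_Agraph_le_nine (h : ℕ) (hh : 1 ≤ h) : stw (Agraph h) ≤ 9 :=
  stw_Agraph_le_nine_general h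

end StretchPaper
end
end
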